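/- arXiv:1608.04167 — 4 statements merged into one kernel-verified Lean document; each statement's English description precedes it below -/
import Mathlib

section
/- Suppose μ̂ is affine on [u, v] with u = x_{k_1} and v = x_{k_2} consecutive kink points (or endpoints). Then |Σ_{i: u ≤ x_i ≤ v} (Y_i - μ̂(x_i))| ≤ |Y_{k_1} - μ̂(x_{k_1})| + |Y_{k_2} - μ̂(x_{k_2})| and |Σ_{i: u ≤ x_i ≤ v} x_i (Y_i - μ̂(x_i))| ≤ |x_{k_1}||Y_{k_1} - μ̂(x_{k_1})| + |x_{k_2}||Y_{k_2} - μ̂(x_{k_2})|. -/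
/-!
Splitting off the two kinks, the sum over `[u, v]` is the sum over `(u, v)` plus the residuals
at `u` and `v`. The closed sum is `≤ 0` and the open one `≥ 0`, so the absolute value of the
closed sum is at most minus the two boundary residuals, hence at most the sum of their absolute
values. The same argument applies verbatim to the residuals weighted by `x i`.
-/

open Finset

section StrictMono

variable {ι α : Type*} [Fintype ι] [LinearOrder ι] [LocallyFiniteOrder ι] [LinearOrder α]
  {x : ι → α}

lemma StrictMono.filter_le_and_le_eq_Icc (hx : StrictMono x) (a b : ι) :
    univ.filter (fun i => x a ≤ x i ∧ x i ≤ x b) = Icc a b := by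
  ext i
  simp [hx.le_iff_le]

lemma StrictMono.filter_lt_and_lt_eq_Ioo (hx : StrictMono x) (a b : ι) :
    univ.filter (fun i => x a < x i ∧ x i < x b) = Ioo a b := by
  ext i
  simp [hx.lt_iff_lt]

end StrictMono

lemma Finset.sum_Icc_eq_sum_Ioo_add_add {ι M : Type*} [PartialOrder ι] [LocallyFiniteOrder ι]
    [AddCommMonoid M] {a b : ι} (h : a < b) (f : ι → M) :
    ∑ i ∈ Icc a b, f i = ∑ i ∈ Ioo a b, f i + f a + f b := by
  rw [← sum_Ioc_add_eq_sum_Icc h.le, ← sum_Ioo_add_eq_sum_Ioc h, add_right_comm]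

lemma abs_le_abs_add_abs_of_eq_add_add {α : Type*} [AddCommGroup α] [LinearOrder α]
    [IsOrderedAddMonoid α] {S T r s : α} (hS : S = T + r + s) (hS_nonpos : S ≤ 0)
    (hT : 0 ≤ T) : |S| ≤ |r| + |s| := by
  calc |S| = -T + (-r + -s) := by rw [abs_of_nonpos hS_nonpos, hS]; abel
    _ ≤ -r + -s := add_le_of_nonpos_left (neg_nonpos.2 hT)
    _ ≤ |r| + |s| := add_le_add (neg_le_abs r) (neg_le_abs s)

theorem stmt_6 (n : ℕ) (x : Fin n → ℝ) (hx : StrictMono x) (Y : Fin n → ℝ)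
    (μhat : ℝ → ℝ) (k1 k2 : Fin n) (hk : k1 < k2)
    (u v : ℝ) (hu : u = x k1) (hv : v = x k2)
    (h1 : ∑ i ∈ Finset.univ.filter (fun i => u ≤ x i ∧ x i ≤ v), (Y i - μhat (x i)) ≤ 0)
    (h2 : ∑ i ∈ Finset.univ.filter (fun i => u ≤ x i ∧ x i ≤ v),
        x i * (Y i - μhat (x i)) ≤ 0)
    (h3 : 0 ≤ ∑ i ∈ Finset.univ.filter (fun i => u < x i ∧ x i < v), (Y i - μhat (x i)))
    (h4 : 0 ≤ ∑ i ∈ Finset.univ.filter (fun i => u < x i ∧ x i < v),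
        x i * (Y i - μhat (x i))) :
    |∑ i ∈ Finset.univ.filter (fun i => u ≤ x i ∧ x i ≤ v), (Y i - μhat (x i))| ≤
      |Y k1 - μhat (x k1)| + |Y k2 - μhat (x k2)| ∧
    |∑ i ∈ Finset.univ.filter (fun i => u ≤ x i ∧ x i ≤ v), x i * (Y i - μhat (x i))| ≤
      |x k1| * |Y k1 - μhat (x k1)| + |x k2| * |Y k2 - μhat (x k2)| := by
  subst hu hv
  rw [hx.filter_le_and_le_eq_Icc] at h1 h2 ⊢
  rw [hx.filter_lt_and_lt_eq_Ioo] at h3 h4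
  simp only [← abs_mul]
  exact ⟨abs_le_abs_add_abs_of_eq_add_add (sum_Icc_eq_sum_Ioo_add_add hk _) h1 h3,
    abs_le_abs_add_abs_of_eq_add_add (sum_Icc_eq_sum_Ioo_add_add hk _) h2 h4⟩
end

section
/- Let ψ̂(x) = p + q x agree with μ̂ on [u,v], and let (â, b̂) be the ordinary least squares intercept and slope over the data points x_i ∈ [u,v] (indices k_1 ≤ i ≤ k_2). Then for all x ∈ [u, v]: |â + b̂x - μ̂(x)| ≤ |v - u| · |(x̄ T¹ - T²)/Σ_{u ≤ x_i ≤ v}(x_i - x̄)²| + |T¹|/(k_2 - k_1 + 1), where T¹ = Σ_{u ≤ x_i ≤ v}(Y_i - μ̂(x_i)), T² = Σ_{u ≤ x_i ≤ v} x_i (Y_i - μ̂(x_i)), and x̄ is the mean of the x_i in [u,v]. -/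
/-!
On the points of `[u, v]` write `Y i = p + q x i + r i`. Least squares reproduces the line
`p + q x` exactly and is linear in the data, so `â + b̂ t - (p + q t)` is the least squares line
of the residuals `r i`: its slope `b̂ - q` is `(T² - x̄ T¹) / Σ (x i - x̄)²` and its value at `x̄`
is the mean `T¹ / N` of the residuals. Evaluating at `t` costs at most `|t - x̄| ≤ |v - u|`
times the slope.
-/

open Finset
open scoped BigOperators

namespace Finset

variable {ι : Type*} (s : Finset ι) (x : ι → ℝ)

theorem sum_sub_expect_eq_zero : ∑ i ∈ s, (x i - 𝔼 j ∈ s, x j) = 0 := by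
  rw [sum_sub_distrib, sum_const, nsmul_eq_mul, card_mul_expect, sub_self]

theorem sum_sub_expect_mul_sub_const (g : ι → ℝ) (c : ℝ) :
    ∑ i ∈ s, (x i - 𝔼 j ∈ s, x j) * (g i - c) = ∑ i ∈ s, (x i - 𝔼 j ∈ s, x j) * g i := by
  rw [← sub_eq_zero, ← sum_sub_distrib, ← mul_zero (-c), ← sum_sub_expect_eq_zero s x, mul_sum]
  exact sum_congr rfl fun i _ => by ring

theorem expect_mem_Icc {u v : ℝ} (hs : s.Nonempty) (hx : ∀ i ∈ s, x i ∈ Set.Icc u v) :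
    𝔼 i ∈ s, x i ∈ Set.Icc u v :=
  ⟨le_expect hs fun i hi => (hx i hi).1, expect_le hs fun i hi => (hx i hi).2⟩

end Finset

section LeastSquares

variable {ι : Type*} (s : Finset ι) (x Y : ι → ℝ) (p q : ℝ)

theorem sum_sub_expect_mul_sub_line :
    ∑ i ∈ s, (x i - 𝔼 j ∈ s, x j) * (Y i - (p + q * x i)) =
      ∑ i ∈ s, (x i - 𝔼 j ∈ s, x j) * (Y i - 𝔼 j ∈ s, Y j) -
        q * ∑ i ∈ s, (x i - 𝔼 j ∈ s, x j) ^ 2 := by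
  have hY := sum_sub_expect_mul_sub_const s x Y (𝔼 j ∈ s, Y j)
  have hx := sum_sub_expect_mul_sub_const s x x (𝔼 j ∈ s, x j)
  have hline := sum_sub_expect_mul_sub_const s x (fun i => Y i - q * x i) p
  simp only [sq, hY, hx, mul_sum, ← sum_sub_distrib]
  simp only [sub_add_eq_sub_sub_swap] at hline ⊢
  rw [hline]
  exact sum_congr rfl fun i _ => by ring

theorem expect_sub_line_eq_sum_div_card (hs : s.Nonempty) :
    𝔼 j ∈ s, Y j - (p + q * 𝔼 j ∈ s, x j) = (∑ i ∈ s, (Y i - (p + q * x i))) / #s := by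
  have hcard : (#s : ℝ) ≠ 0 := Nat.cast_ne_zero.2 hs.card_ne_zero
  rw [eq_div_iff hcard, sum_sub_distrib, sum_add_distrib, ← mul_sum, sum_const, nsmul_eq_mul,
    ← card_mul_expect s x, ← card_mul_expect s Y]
  ring

end LeastSquares

theorem abs_add_mul_sub_le {u v t m : ℝ} (A B : ℝ) (ht : t ∈ Set.Icc u v)
    (hm : m ∈ Set.Icc u v) : |A + B * (m - t)| ≤ |v - u| * |B| + |A| := by
  have hdist : |m - t| ≤ |v - u| :=
    Real.dist_le_of_mem_uIcc (Set.Icc_subset_uIcc' hm) (Set.Icc_subset_uIcc' ht)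
  calc |A + B * (m - t)| ≤ |A| + |B| * |m - t| := by rw [← abs_mul]; exact abs_add_le _ _
    _ ≤ |v - u| * |B| + |A| := by nlinarith [abs_nonneg B]

theorem stmt_7_general (n : ℕ) (x Y : Fin n → ℝ) (μhat : ℝ → ℝ)
    (u v p q : ℝ)
    (S : Finset (Fin n)) (hS : S = Finset.univ.filter (fun i => u ≤ x i ∧ x i ≤ v))
    (k1 k2 : ℕ) (hk : k1 ≤ k2) (hcard : S.card = k2 - k1 + 1)
    (haff : ∀ t ∈ Set.Icc u v, μhat t = p + q * t)
    (xbar Ybar : ℝ)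
    (hxbar : xbar = (∑ i ∈ S, x i) / S.card)
    (hYbar : Ybar = (∑ i ∈ S, Y i) / S.card)
    (hpos : 0 < ∑ i ∈ S, (x i - xbar) ^ 2)
    (bhat ahat : ℝ)
    (hb : bhat = (∑ i ∈ S, (x i - xbar) * (Y i - Ybar)) / ∑ i ∈ S, (x i - xbar) ^ 2)
    (ha : ahat = Ybar - bhat * xbar)
    (T1 T2 : ℝ)
    (hT1 : T1 = ∑ i ∈ S, (Y i - μhat (x i)))
    (hT2 : T2 = ∑ i ∈ S, x i * (Y i - μhat (x i))) :
    ∀ t ∈ Set.Icc u v,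
      |ahat + bhat * t - μhat t| ≤
        |v - u| * |(xbar * T1 - T2) / ∑ i ∈ S, (x i - xbar) ^ 2| +
          |T1| / ((k2 : ℝ) - (k1 : ℝ) + 1) := by
  intro t ht
  have hx : xbar = 𝔼 i ∈ S, x i := hxbar.trans (expect_eq_sum_div_card S x).symm
  have hY : Ybar = 𝔼 i ∈ S, Y i := hYbar.trans (expect_eq_sum_div_card S Y).symm
  have hne : S.Nonempty := card_pos.1 (by omega)
  have hmem : ∀ i ∈ S, x i ∈ Set.Icc u v := fun i hi => by simpa [hS] using hi
  have hresid : ∀ i ∈ S, Y i - μhat (x i) = Y i - (p + q * x i) := fun i hi => by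
    rw [haff _ (hmem i hi)]
  have hT : T2 - xbar * T1 = ∑ i ∈ S, (x i - xbar) * (Y i - (p + q * x i)) := by
    rw [hT1, hT2, mul_sum, ← sum_sub_distrib]
    exact sum_congr rfl fun i hi => by rw [hresid i hi]; ring
  have hslope : bhat - q = (T2 - xbar * T1) / ∑ i ∈ S, (x i - xbar) ^ 2 := by
    rw [hT, hb, hx, hY, sum_sub_expect_mul_sub_line, sub_div, ← hx,
      mul_div_cancel_right₀ _ hpos.ne']
  have hmean : Ybar - (p + q * xbar) = T1 / #S := by
    rw [hx, hY, expect_sub_line_eq_sum_div_card S x Y p q hne, hT1, sum_congr rfl hresid]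
  have hN : (k2 : ℝ) - k1 + 1 = #S := by rw [hcard]; push_cast [Nat.cast_sub hk]; ring
  calc |ahat + bhat * t - μhat t|
      = |T1 / #S + ((xbar * T1 - T2) / ∑ i ∈ S, (x i - xbar) ^ 2) * (xbar - t)| := by
        rw [haff t ht, ha, ← hmean, ← neg_sub T2, neg_div, ← hslope]
        congr 1; ring
    _ ≤ _ := abs_add_mul_sub_le _ _ ht (hx ▸ expect_mem_Icc S x hne hmem)
    _ = _ := by rw [hN, abs_div T1, abs_of_pos (by positivity : (0 : ℝ) < #S)]

theorem stmt_7 (n : ℕ) (x Y : Fin n → ℝ) (μhat : ℝ → ℝ)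
    (u v p q : ℝ) (huv : u < v)
    (S : Finset (Fin n)) (hS : S = Finset.univ.filter (fun i => u ≤ x i ∧ x i ≤ v))
    (k1 k2 : ℕ) (hk : k1 ≤ k2) (hcard : S.card = k2 - k1 + 1)
    (haff : ∀ t ∈ Set.Icc u v, μhat t = p + q * t)
    (xbar Ybar : ℝ)
    (hxbar : xbar = (∑ i ∈ S, x i) / S.card)
    (hYbar : Ybar = (∑ i ∈ S, Y i) / S.card)
    (hpos : 0 < ∑ i ∈ S, (x i - xbar) ^ 2)
    (bhat ahat : ℝ)
    (hb : bhat = (∑ i ∈ S, (x i - xbar) * (Y i - Ybar)) / ∑ i ∈ S, (x i - xbar) ^ 2)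
    (ha : ahat = Ybar - bhat * xbar)
    (T1 T2 : ℝ)
    (hT1 : T1 = ∑ i ∈ S, (Y i - μhat (x i)))
    (hT2 : T2 = ∑ i ∈ S, x i * (Y i - μhat (x i))) :
    ∀ t ∈ Set.Icc u v,
      |ahat + bhat * t - μhat t| ≤
        |v - u| * |(xbar * T1 - T2) / ∑ i ∈ S, (x i - xbar) ^ 2| +
          |T1| / ((k2 : ℝ) - (k1 : ℝ) + 1) :=
  stmt_7_general n x Y μhat u v p q S hS k1 k2 hk hcard haff xbar Ybar hxbar hYbar hpos bhat ahat hb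
    ha T1 T2 hT1 hT2
end

section
/- If x is a kink point of the convex LSE μ̂ in (x_1, x_n) with index m (x = x_m a design point), and G(a_x) ≥ 0, G(b_x) ≥ 0, G(x) = 0 for the nearest design points a_x < x < b_x, then |Σ_{x_i ≤ x} (Y_i - μ̂(x_i))| ≤ |Y_m - μ̂(x_m)|, where G(t) = Σ_{x_i ≤ t}(Y_i - μ̂(x_i))(t - x_i). -/
theorem stmt_8 (n : ℕ) (x : Fin n → ℝ) (hx : StrictMono x) (Y : Fin n → ℝ)
    (μhat : ℝ → ℝ) (m : Fin n) (a b : ℝ)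
    (ha_pt : ∃ j, x j = a) (hb_pt : ∃ j, x j = b)
    (hab : a < x m ∧ x m < b)
    (hnear : ∀ i, x i ≤ a ∨ x i = x m ∨ b ≤ x i)
    (G : ℝ → ℝ)
    (hG : G = fun t =>
      ∑ i ∈ Finset.univ.filter (fun i => x i ≤ t), (Y i - μhat (x i)) * (t - x i))
    (hGa : 0 ≤ G a) (hGb : 0 ≤ G b) (hGm : G (x m) = 0) :
    |∑ i ∈ Finset.univ.filter (fun i => x i ≤ x m), (Y i - μhat (x i))| ≤
      |Y m - μhat (x m)| := by
  obtain ⟨ham, hmb⟩ := hab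
  simp only [hG] at hGa hGb hGm
  set r : Fin n → ℝ := fun i => Y i - μhat (x i) with hr
  set A := Finset.univ.filter (fun i => x i ≤ a) with hA
  set M := Finset.univ.filter (fun i => x i ≤ x m) with hM
  have hmA : m ∉ A := by
    simp only [hA, Finset.mem_filter, Finset.mem_univ, true_and, not_le]
    exact ham
  have hMA : M = insert m A := by
    ext i
    simp only [hM, hA, Finset.mem_insert, Finset.mem_filter, Finset.mem_univ, true_and]
    constructor
    · intro h
      rcases hnear i with h1 | h1 | h1
      · exact Or.inr h1
      · exact Or.inl (hx.injective h1)
      · exfalso; linarith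
    · rintro (rfl | h)
      · exact le_refl _
      · linarith
  have hMb : M = Finset.univ.filter (fun i => x i < b) := by
    ext i
    simp only [hM, Finset.mem_filter, Finset.mem_univ, true_and]
    constructor
    · intro h; linarith
    · intro h
      rcases hnear i with h1 | h1 | h1
      · linarith
      · exact le_of_eq h1
      · exfalso; linarith
  set S := ∑ i ∈ M, r i with hS
  -- G(b) rewritten over M
  have hGb2 : (∑ i ∈ Finset.univ.filter (fun i => x i ≤ b), r i * (b - x i))
      = ∑ i ∈ M, r i * (b - x i) := by
    rw [hMb]
    refine (Finset.sum_subset ?_ ?_).symm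
    · intro i hi
      simp only [Finset.mem_filter, Finset.mem_univ, true_and] at hi ⊢
      exact le_of_lt hi
    · intro i hi hni
      simp only [Finset.mem_filter, Finset.mem_univ, true_and, not_lt] at hi hni
      have hxib : x i = b := le_antisymm hi hni
      rw [hxib]; ring
  have hGm0 : ∑ i ∈ M, r i * (x m - x i) = 0 := hGm
  have hkey_b : ∑ i ∈ M, r i * (b - x i)
      = (b - x m) * S + ∑ i ∈ M, r i * (x m - x i) := by
    rw [hS, Finset.mul_sum, ← Finset.sum_add_distrib]
    exact Finset.sum_congr rfl fun i _ => by ring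
  have hSnonneg : 0 ≤ S := by
    have h0 : 0 ≤ (b - x m) * S := by
      have := hGb
      rw [hGb2, hkey_b, hGm0] at this
      linarith
    have hb' : 0 < b - x m := by linarith
    exact nonneg_of_mul_nonneg_right h0 hb'
  -- a side
  have hSA : S = r m + ∑ i ∈ A, r i := by
    rw [hS, hMA, Finset.sum_insert hmA]
  have hGmA : ∑ i ∈ A, r i * (x m - x i) = 0 := by
    have : ∑ i ∈ M, r i * (x m - x i) = r m * (x m - x m) + ∑ i ∈ A, r i * (x m - x i) := by
      rw [hMA, Finset.sum_insert hmA]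
    rw [this] at hGm0
    linarith [hGm0]
  have hkey_a : ∑ i ∈ A, r i * (a - x i)
      = (a - x m) * (∑ i ∈ A, r i) + ∑ i ∈ A, r i * (x m - x i) := by
    rw [Finset.mul_sum, ← Finset.sum_add_distrib]
    exact Finset.sum_congr rfl fun i _ => by ring
  have hSle : S ≤ r m := by
    have h0 : 0 ≤ (a - x m) * (∑ i ∈ A, r i) := by
      have := hGa
      rw [hkey_a, hGmA] at this
      linarith
    have ha' : a - x m < 0 := by linarith
    have : ∑ i ∈ A, r i ≤ 0 := by
      by_contra h
      push_neg at h
      nlinarith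
    linarith [hSA, this]
  calc |S| = S := abs_of_nonneg hSnonneg
    _ ≤ r m := hSle
    _ ≤ |r m| := le_abs_self _
end

section
/- If μ is convex on [0,1] and r-times differentiable at x_0 with μ^{(r)} continuous and positive on (x_0 - δ, x_0 + δ), and μ^{(k)}(x_0) = 0 for k = 2,...,r-1, then μ'(x_0 - δ/3) - μ'(x_0 - δ) ≥ c · μ^{(r)}(x_0) · δ^{r-1} for some constant c > 0 depending only on r. -/
/-!
Write `M = μ⁽ʳ⁾(x₀)`. Since `μ⁽ᵏ⁾(x₀) = 0` for `2 ≤ k < r` and `μ⁽ʳ⁾ ≥ M/2` near `x₀`, integrating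
`r - 2` times from `x₀` gives `(-1)ʳ μ''(t) ≥ (M/2) (x₀ - t)ʳ⁻² / (r-2)!` for `t` left of `x₀`.
Convexity forces `μ'' ≥ 0`, so the sign can be dropped. Hence `μ'' ≥ (M/2) (δ/3)ʳ⁻² / (r-2)!`
on `[x₀ - 2δ/3, x₀ - δ/3]`; the mean value theorem on that interval and the monotonicity of `μ'`
on `[x₀ - δ, x₀ - 2δ/3]` give the bound with `c = 1 / (2 · 3ʳ⁻¹ · (r-2)!)`.
-/

open Set Nat

section

variable {𝕜 F : Type*} [NontriviallyNormedField 𝕜] [NormedAddCommGroup F] [NormedSpace 𝕜 F]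

theorem iteratedDeriv_iteratedDeriv (m n : ℕ) (f : 𝕜 → F) :
    iteratedDeriv m (iteratedDeriv n f) = iteratedDeriv (m + n) f := by
  simp only [iteratedDeriv_eq_iterate, Function.iterate_add_apply]

theorem ContDiffOn.hasDerivAt_iteratedDeriv {f : 𝕜 → F} {s : Set 𝕜} {n : WithTop ℕ∞} {j : ℕ}
    {x : 𝕜} (hf : ContDiffOn 𝕜 n f s) (hs : IsOpen s) (hj : j < n) (hx : x ∈ s) :
    HasDerivAt (iteratedDeriv j f) (iteratedDeriv (j + 1) f x) x := by
  have hd := (hf.differentiableOn_iteratedDerivWithin hj hs.uniqueDiffOn).congr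
    fun y hy => (iteratedDerivWithin_of_isOpen hs hy).symm
  rw [iteratedDeriv_succ]
  exact ((hd x hx).differentiableAt (hs.mem_nhds hx)).hasDerivAt

end

theorem ConvexOn.nonneg_of_hasDerivAt_deriv {f : ℝ → ℝ} {s : Set ℝ} {x f'' : ℝ}
    (hf : ConvexOn ℝ s f) (hs : IsOpen s) (hd : ∀ y ∈ s, DifferentiableAt ℝ f y)
    (hx : x ∈ s) (hf'' : HasDerivAt (deriv f) f'' x) : 0 ≤ f'' :=
  hf''.hasDerivWithinAt.nonneg_of_monotoneOn (hs.preperfect x hx) (hf.monotoneOn_deriv hd)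

theorem mul_pow_div_factorial_le_neg_one_pow_mul {f : ℝ → ℝ} {a b C x : ℝ} {n : ℕ}
    (hf : ∀ j < n, DifferentiableOn ℝ (iteratedDeriv j f) (Icc a b))
    (hb : ∀ j < n, iteratedDeriv j f b = 0)
    (hC : ∀ t ∈ Icc a b, C ≤ iteratedDeriv n f t) (hx : x ∈ Icc a b) :
    C * (b - x) ^ n / n ! ≤ (-1) ^ n * f x := by
  induction n generalizing f x with
  | zero => simpa using hC x hx
  | succ n ih =>
    have hf' : ∀ t ∈ Icc a b, C * (b - t) ^ n / n ! ≤ (-1) ^ n * deriv f t := fun t ht =>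
      ih (fun j hj => by simpa [iteratedDeriv_succ'] using hf (j + 1) (by omega))
        (fun j hj => by simpa [iteratedDeriv_succ'] using hb (j + 1) (by omega))
        (by simpa [iteratedDeriv_succ'] using hC) ht
    have hdf : DifferentiableOn ℝ f (Icc a b) := by simpa using hf 0 (by omega)
    set g := fun t => C * (b - t) ^ (n + 1) / (n + 1)! - (-1) ^ (n + 1) * f t
    have hg : ∀ t ∈ Ioo a b,
        HasDerivAt g (-(C * (b - t) ^ n / n !) + (-1) ^ n * deriv f t) t := by
      intro t ht
      have hft := ((hdf t (Ioo_subset_Icc_self ht)).differentiableAt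
        (Icc_mem_nhds ht.1 ht.2)).hasDerivAt
      have hpow := (((hasDerivAt_id' t).const_sub b).fun_pow (n + 1)).const_mul C
      refine ((hpow.div_const ((n + 1)! : ℝ)).fun_sub
        (hft.const_mul ((-1) ^ (n + 1)))).congr_deriv ?_
      rw [Nat.add_sub_cancel, factorial_succ, pow_succ]
      push_cast
      field_simp
      ring
    have hmono : MonotoneOn g (Icc a b) := by
      have hfc := hdf.continuousOn
      refine monotoneOn_of_hasDerivWithinAt_nonneg (convex_Icc a b) (by fun_prop)
        (f' := fun t => -(C * (b - t) ^ n / n !) + (-1) ^ n * deriv f t)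
        (fun t ht => ?_) (fun t ht => ?_)
      · rw [interior_Icc] at ht ⊢
        exact (hg t ht).hasDerivWithinAt
      · rw [interior_Icc] at ht
        linarith [hf' t (Ioo_subset_Icc_self ht)]
    have hgb : g b = 0 := by simpa [g] using hb 0 (by omega)
    have hgx : g x ≤ 0 := hgb ▸ hmono hx (right_mem_Icc.2 (hx.1.trans hx.2)) hx.2
    exact sub_nonpos.1 hgx

theorem ConvexOn.mul_pow_div_factorial_le_iteratedDeriv_two {f : ℝ → ℝ} {s : Set ℝ}
    {a b C t : ℝ} {n : ℕ} (hf : ConvexOn ℝ s f) (hs : IsOpen s)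
    (hf' : ContDiffOn ℝ (n + 2 : ℕ) f s) (hab : Icc a b ⊆ s)
    (hb : ∀ k, 2 ≤ k → k < n + 2 → iteratedDeriv k f b = 0)
    (hC : ∀ t ∈ Icc a b, C ≤ iteratedDeriv (n + 2) f t) (ht : t ∈ Icc a b) :
    C * (b - t) ^ n / n ! ≤ iteratedDeriv 2 f t := by
  have hderiv : ∀ j < n + 2, ∀ t ∈ s,
      HasDerivAt (iteratedDeriv j f) (iteratedDeriv (j + 1) f t) t := fun j hj t ht =>
    hf'.hasDerivAt_iteratedDeriv hs (by exact_mod_cast hj) ht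
  have hf''_nonneg : 0 ≤ iteratedDeriv 2 f t :=
    hf.nonneg_of_hasDerivAt_deriv hs
      (fun y hy => by simpa using (hderiv 0 (by omega) y hy).differentiableAt) (hab ht)
      (by simpa using hderiv 1 (by omega) t (hab ht))
  refine (mul_pow_div_factorial_le_neg_one_pow_mul (f := iteratedDeriv 2 f) (fun j hj => ?_)
    (fun j hj => ?_) (fun y hy => ?_) ht).trans ?_
  · rw [iteratedDeriv_iteratedDeriv]
    exact fun y hy =>
      (hderiv (j + 2) (by omega) y (hab hy)).differentiableAt.differentiableWithinAt
  · rw [iteratedDeriv_iteratedDeriv]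
    exact hb _ (by omega) (by omega)
  · rw [iteratedDeriv_iteratedDeriv]
    exact hC y hy
  · calc (-1) ^ n * iteratedDeriv 2 f t ≤ |(-1) ^ n * iteratedDeriv 2 f t| := le_abs_self _
      _ = iteratedDeriv 2 f t := by
        rw [abs_mul, abs_neg_one_pow, one_mul, abs_of_nonneg hf''_nonneg]

theorem ConvexOn.mul_sub_le_deriv_sub_deriv {f f'' : ℝ → ℝ} {s : Set ℝ} {p a b K : ℝ}
    (hf : ConvexOn ℝ s f) (hp : p ∈ s) (ha : a ∈ s) (hpa : p < a) (hab : a < b)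
    (hdp : DifferentiableAt ℝ f p) (hda : DifferentiableAt ℝ f a)
    (hf'' : ∀ t ∈ Icc a b, HasDerivAt (deriv f) (f'' t) t) (hK : ∀ t ∈ Icc a b, K ≤ f'' t) :
    K * (b - a) ≤ deriv f b - deriv f p := by
  have hmono : deriv f p ≤ deriv f a :=
    (hf.deriv_le_slope hp ha hpa hdp).trans (hf.slope_le_deriv hp ha hpa hda)
  obtain ⟨ξ, hξ, hslope⟩ := exists_hasDerivAt_eq_slope (deriv f) f'' hab
    (fun t ht => (hf'' t ht).continuousAt.continuousWithinAt)
    (fun t ht => hf'' t (Ioo_subset_Icc_self ht))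
  have hK' := mul_le_mul_of_nonneg_right (hK ξ (Ioo_subset_Icc_self hξ)) (sub_nonneg.2 hab.le)
  rw [hslope, div_mul_cancel₀ _ (sub_ne_zero.2 hab.ne')] at hK'
  linarith

theorem stmt_10 (r : ℕ) (hr : 2 ≤ r) :
    ∃ c > (0 : ℝ), ∀ (μ : ℝ → ℝ) (x0 δ : ℝ), 0 < δ → 0 < x0 - δ → x0 + δ < 1 →
      ConvexOn ℝ (Set.Icc (0 : ℝ) 1) μ →
      ContDiffOn ℝ r μ (Set.Ioo (x0 - δ) (x0 + δ)) →
      DifferentiableAt ℝ μ (x0 - δ) →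
      (∀ k, 2 ≤ k → k ≤ r - 1 → iteratedDeriv k μ x0 = 0) →
      0 < iteratedDeriv r μ x0 →
      (∀ t ∈ Set.Ioo (x0 - δ) (x0 + δ), iteratedDeriv r μ x0 / 2 < iteratedDeriv r μ t) →
      c * iteratedDeriv r μ x0 * δ ^ (r - 1) ≤ deriv μ (x0 - δ / 3) - deriv μ (x0 - δ) := by
  obtain ⟨n, rfl⟩ := Nat.exists_eq_add_of_le' hr
  refine ⟨1 / (2 * 3 ^ (n + 1) * n !), by positivity, ?_⟩
  intro μ x0 δ hδ h0 h1 hconv hsmooth hdiff hvanish hM hlow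
  set M := iteratedDeriv (n + 2) μ x0
  have hI : Ioo (x0 - δ) (x0 + δ) ⊆ Icc 0 1 :=
    Ioo_subset_Icc_self.trans (Icc_subset_Icc h0.le h1.le)
  have hsub : Icc (x0 - 2 * δ / 3) x0 ⊆ Ioo (x0 - δ) (x0 + δ) :=
    Icc_subset_Ioo (by linarith) (by linarith)
  have hderiv : ∀ j < n + 2, ∀ t ∈ Icc (x0 - 2 * δ / 3) x0,
      HasDerivAt (iteratedDeriv j μ) (iteratedDeriv (j + 1) μ t) t := fun j hj t ht =>
    hsmooth.hasDerivAt_iteratedDeriv isOpen_Ioo (by exact_mod_cast hj) (hsub ht)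
  have hμ'' : ∀ t ∈ Icc (x0 - 2 * δ / 3) (x0 - δ / 3),
      M / 2 * (δ / 3) ^ n / n ! ≤ iteratedDeriv 2 μ t := fun t ht =>
    le_trans (by gcongr; linarith [ht.2])
      ((hconv.subset hI (convex_Ioo _ _)).mul_pow_div_factorial_le_iteratedDeriv_two isOpen_Ioo
        hsmooth hsub (fun k hk hk' => hvanish k hk (by omega))
        (fun t ht => (hlow t (hsub ht)).le)
        ⟨ht.1, by linarith [ht.2]⟩)
  have hincr := hconv.mul_sub_le_deriv_sub_deriv (p := x0 - δ) ⟨by linarith, by linarith⟩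
    ⟨by linarith, by linarith⟩ (by linarith) (by linarith) hdiff
    (by simpa using (hderiv 0 (by omega) _ ⟨le_rfl, by linarith⟩).differentiableAt)
    (fun t ht => by simpa using hderiv 1 (by omega) t ⟨ht.1, by linarith [ht.2]⟩) hμ''
  rw [show n + 2 - 1 = n + 1 by omega]
  calc 1 / (2 * 3 ^ (n + 1) * n !) * M * δ ^ (n + 1)
      = M / 2 * (δ / 3) ^ n / n ! * (x0 - δ / 3 - (x0 - 2 * δ / 3)) := by
        rw [div_pow]
        field_simp
        ring
    _ ≤ deriv μ (x0 - δ / 3) - deriv μ (x0 - δ) := hincr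
end
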